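/- arXiv:0810.1408 — 7 statements merged into one kernel-verified Lean document; each statement's English description precedes it below -/
import Mathlib

section
/- Let α ∈ (0,1/2) and for z in the upper half-plane Π⁺ define f_k(z) = 2^{α-1} [α(1−2α)(2−2α)_k / (2 cos(πα) k!)]^{1/2} ((z+i)/(2i))^{2α−2} ((z−i)/(z+i))^k, where (x)_k is the Pochhammer symbol. Then for all z,w ∈ Π⁺ the series Σ_{k≥0} f_k(z) \overline{f_k(w)} converges absolutely and equals (α(1−2α)/(2 cos πα)) (−i(z − \bar{w}))^{2α−2}, where ζ^{2α−2} = exp((2α−2) log ζ) with the principal branch of the logarithm on ℂ∖ℝ₋. -/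
/-!
With the Cayley transform `p(z) = (z - i)/(z + i)`, which maps the upper half-plane into the unit
disc, the `k`-th term of the series is a `k`-independent factor times
`(2-2α)_k / k! · (p(z) \overline{p(w)})^k`, so the series is the binomial series of
`(1 - p(z) \overline{p(w)})^{2α-2}`. The identity
`-i(z - \bar w) = 2 · (z+i)/(2i) · \overline{(w+i)/(2i)} · (1 - p(z) \overline{p(w)})`, in which every
factor and the product lie in the right half-plane, lets the principal power split over the product.
-/

open Complex Real ComplexConjugate
open scoped Nat

theorem Ring.choose_add_natCast_sub_one {K : Type*} [Field K] [CharZero K] (a : K) (n : ℕ) :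
    Ring.choose (a + n - 1) n = (ascPochhammer K n).eval a / n ! := by
  rw [← Ring.multichoose_eq, eq_div_iff (by exact_mod_cast n.factorial_ne_zero), mul_comm,
    ← nsmul_eq_mul, Ring.factorial_nsmul_multichoose_eq_ascPochhammer,
    Polynomial.ascPochhammer_smeval_eq_eval]

namespace Complex

theorem one_sub_cpow_neg_hasFPowerSeriesOnBall_zero (a : ℂ) :
    HasFPowerSeriesOnBall (fun x ↦ (1 - x) ^ (-a))
      (.ofScalars ℂ fun n ↦ (ascPochhammer ℂ n).eval a / n !) 0 1 := by
  simpa [cpow_neg, Ring.choose_add_natCast_sub_one] using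
    one_div_one_sub_cpow_hasFPowerSeriesOnBall_zero a

theorem hasSum_ascPochhammer_div_factorial_mul_pow (a : ℂ) {q : ℂ} (hq : ‖q‖ < 1) :
    HasSum (fun n ↦ (ascPochhammer ℂ n).eval a / n ! * q ^ n) ((1 - q) ^ (-a)) := by
  simpa [mul_comm] using (one_sub_cpow_neg_hasFPowerSeriesOnBall_zero a).hasSum
    (y := q) (by simpa [← ofReal_norm] using hq)

theorem summable_norm_ascPochhammer_div_factorial_mul_pow (a : ℂ) {q : ℂ} (hq : ‖q‖ < 1) :
    Summable (fun n ↦ ‖(ascPochhammer ℂ n).eval a / n ! * q ^ n‖) := by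
  have h := one_sub_cpow_neg_hasFPowerSeriesOnBall_zero a
  simpa [mul_comm] using FormalMultilinearSeries.summable_norm_apply _
    (Metric.eball_subset_eball h.r_le (by simpa [← ofReal_norm] using hq))

theorem ofReal_ascPochhammer_eval (n : ℕ) (x : ℝ) :
    (((ascPochhammer ℝ n).eval x : ℝ) : ℂ) = (ascPochhammer ℂ n).eval (x : ℂ) := by
  rw [ascPochhammer_eval₂ ofRealHom]
  exact (Polynomial.eval₂_at_apply ofRealHom x).symm

theorem conj_cpow_ofReal {x : ℂ} (hx : x.arg ≠ π) (r : ℝ) :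
    conj (x ^ (r : ℂ)) = conj x ^ (r : ℂ) := by
  rw [conj_cpow x r hx, conj_ofReal]

theorem mul_cpow_of_arg_add_mem {a b : ℂ} (ha : a ≠ 0) (hb : b ≠ 0)
    (h : arg a + arg b ∈ Set.Ioc (-π) π) (s : ℂ) : (a * b) ^ s = a ^ s * b ^ s := by
  rw [cpow_def_of_ne_zero (mul_ne_zero ha hb), cpow_def_of_ne_zero ha, cpow_def_of_ne_zero hb,
    log_mul ha hb h, add_mul, exp_add]

theorem ofReal_mul_cpow {r : ℝ} (hr : 0 < r) {a : ℂ} (ha : a ≠ 0) (s : ℂ) :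
    ((r : ℂ) * a) ^ s = (r : ℂ) ^ s * a ^ s :=
  mul_cpow_of_arg_add_mem (ofReal_ne_zero.2 hr.ne') ha
    (by simpa [arg_ofReal_of_nonneg hr.le] using arg_mem_Ioc a) s

theorem arg_mul_mul_of_re_pos {a b c : ℂ} (ha : 0 < a.re) (hb : 0 < b.re) (hc : 0 < c.re)
    (habc : 0 < (a * b * c).re) : arg (a * b * c) = arg a + arg b + arg c := by
  have harg : ∀ {x : ℂ}, 0 < x.re → |arg x| < π / 2 :=
    fun hx => abs_arg_lt_pi_div_two_iff.2 (Or.inl hx)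
  have hangle : (arg (a * b * c) : Real.Angle) = (arg a + arg b + arg c : ℝ) := by
    rw [arg_mul_coe_angle (mul_ne_zero (ne_zero_of_re_pos ha) (ne_zero_of_re_pos hb))
      (ne_zero_of_re_pos hc), arg_mul_coe_angle (ne_zero_of_re_pos ha) (ne_zero_of_re_pos hb)]
    rfl
  obtain ⟨k, hk⟩ := Real.Angle.angle_eq_iff_two_pi_dvd_sub.1 hangle
  -- `arg (a * b * c)` lies within `π / 2` of `0` and the sum within `3π / 2`, so `2πk = 0`
  have hk0 : k = 0 := by
    have : |(k : ℝ)| < 1 := by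
      have := harg ha; have := harg hb; have := harg hc; have := harg habc
      rw [abs_lt] at *
      constructor <;> nlinarith [pi_pos]
    exact_mod_cast Int.abs_lt_one_iff.1 (by exact_mod_cast this)
  rwa [hk0, Int.cast_zero, mul_zero, sub_eq_zero] at hk

theorem mul_mul_cpow_of_re_pos {a b c : ℂ} (ha : 0 < a.re) (hb : 0 < b.re) (hc : 0 < c.re)
    (habc : 0 < (a * b * c).re) (s : ℂ) : (a * b * c) ^ s = a ^ s * b ^ s * c ^ s := by
  have hlog : log (a * b * c) = log a + log b + log c := by
    apply Complex.ext
    · simp only [log_re, add_re, norm_mul]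
      rw [Real.log_mul, Real.log_mul] <;>
        simp [ne_zero_of_re_pos ha, ne_zero_of_re_pos hb, ne_zero_of_re_pos hc]
    · simp only [log_im, add_im, arg_mul_mul_of_re_pos ha hb hc habc]
  rw [cpow_def_of_ne_zero (ne_zero_of_re_pos habc), cpow_def_of_ne_zero (ne_zero_of_re_pos ha),
    cpow_def_of_ne_zero (ne_zero_of_re_pos hb), cpow_def_of_ne_zero (ne_zero_of_re_pos hc), hlog,
    add_mul, add_mul, exp_add, exp_add]

theorem add_I_ne_zero_of_im_pos {z : ℂ} (hz : 0 < z.im) : z + I ≠ 0 := fun h => by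
  have := congrArg im h
  simp only [add_im, I_im, zero_im] at this
  linarith

theorem re_add_I_div_two_I (z : ℂ) : ((z + I) / (2 * I)).re = (z.im + 1) / 2 := by
  rw [div_re]; simp [normSq_apply]; ring

theorem norm_sub_I_div_add_I_lt_one {z : ℂ} (hz : 0 < z.im) : ‖(z - I) / (z + I)‖ < 1 := by
  rw [norm_div, div_lt_one (norm_pos_iff.2 (add_I_ne_zero_of_im_pos hz)),
    ← sq_lt_sq₀ (norm_nonneg _) (norm_nonneg _), Complex.sq_norm, Complex.sq_norm,
    normSq_apply, normSq_apply]
  simp only [sub_re, add_re, sub_im, add_im, I_re, I_im]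
  nlinarith

theorem norm_sub_I_div_add_I_mul_conj_lt_one {z w : ℂ} (hz : 0 < z.im) (hw : 0 < w.im) :
    ‖(z - I) / (z + I) * conj ((w - I) / (w + I))‖ < 1 := by
  rw [norm_mul, RCLike.norm_conj]
  exact mul_lt_one_of_nonneg_of_lt_one_left (norm_nonneg _) (norm_sub_I_div_add_I_lt_one hz)
    (norm_sub_I_div_add_I_lt_one hw).le

theorem two_mul_mul_one_sub_eq {z w : ℂ} (hz : z + I ≠ 0) (hw : w + I ≠ 0) :
    2 * ((z + I) / (2 * I)) * conj ((w + I) / (2 * I)) *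
      (1 - (z - I) / (z + I) * conj ((w - I) / (w + I))) = -I * (z - conj w) := by
  have hw' : conj w - I ≠ 0 := by
    simpa [← conj_I, ← map_sub, ← map_add, sub_eq_add_neg] using hw
  simp only [map_div₀, map_add, map_sub, map_mul, conj_I, map_ofNat]
  rw [← sub_eq_add_neg]
  field_simp
  linear_combination (2 * z * I - 2 * I * conj w) * I_sq

theorem neg_I_mul_sub_conj_cpow {z w : ℂ} (hz : 0 < z.im) (hw : 0 < w.im) (s : ℂ) :
    (-I * (z - conj w)) ^ s = 2 ^ s * ((z + I) / (2 * I)) ^ s * conj ((w + I) / (2 * I)) ^ s *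
      (1 - (z - I) / (z + I) * conj ((w - I) / (w + I))) ^ s := by
  have hprod := two_mul_mul_one_sub_eq (add_I_ne_zero_of_im_pos hz) (add_I_ne_zero_of_im_pos hw)
  rw [← hprod]
  set u := (z + I) / (2 * I)
  set v := conj ((w + I) / (2 * I))
  set q := (z - I) / (z + I) * conj ((w - I) / (w + I))
  have hu : 0 < u.re := by rw [re_add_I_div_two_I]; linarith
  have hv : 0 < v.re := by rw [conj_re, re_add_I_div_two_I]; linarith
  have hq : 0 < (1 - q).re := by
    have := (re_le_norm q).trans_lt (norm_sub_I_div_add_I_mul_conj_lt_one hz hw)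
    simp only [sub_re, one_re]; linarith
  have huvq : 0 < (u * v * (1 - q)).re := by
    rw [show u * v * (1 - q) = (-I * (z - conj w)) / 2 by rw [← hprod]; ring]
    simp; linarith
  rw [mul_assoc, mul_assoc, ← mul_assoc u, ← ofReal_ofNat,
    ofReal_mul_cpow two_pos (ne_zero_of_re_pos huvq), mul_mul_cpow_of_re_pos hu hv hq huvq]
  ring

end Complex

/-- The functions `f_k` in the series expansion of the analytic fBm covariance. -/
noncomputable def afbmCoeff (α : ℝ) (k : ℕ) (z : ℂ) : ℂ :=
  (2 : ℂ) ^ ((α : ℂ) - 1) *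
    (Real.sqrt (α * (1 - 2 * α) * ((ascPochhammer ℝ k).eval (2 - 2 * α)) /
      (2 * Real.cos (π * α) * (Nat.factorial k))) : ℂ) *
    ((z + I) / (2 * I)) ^ (2 * (α : ℂ) - 2) *
    ((z - I) / (z + I)) ^ k

theorem afbmCoeff_mul_conj {α : ℝ} (hα : α ∈ Set.Ioo (0 : ℝ) (1 / 2)) (z : ℂ) {w : ℂ}
    (hw : 0 < w.im) (k : ℕ) :
    afbmCoeff α k z * conj (afbmCoeff α k w) =
      ((α * (1 - 2 * α) / (2 * Real.cos (π * α)) : ℝ) : ℂ) * 2 ^ (2 * (α : ℂ) - 2) *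
        ((z + I) / (2 * I)) ^ (2 * (α : ℂ) - 2) * conj ((w + I) / (2 * I)) ^ (2 * (α : ℂ) - 2) *
        ((ascPochhammer ℂ k).eval (2 - 2 * (α : ℂ)) / k ! *
          ((z - I) / (z + I) * conj ((w - I) / (w + I))) ^ k) := by
  obtain ⟨hα0, hα1⟩ := hα
  have hcos : 0 < Real.cos (π * α) :=
    Real.cos_pos_of_mem_Ioo ⟨by nlinarith [pi_pos], by nlinarith [pi_pos]⟩
  set r := α * (1 - 2 * α) * (ascPochhammer ℝ k).eval (2 - 2 * α) /
    (2 * Real.cos (π * α) * k !)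
  have hr : 0 ≤ r := by
    have := ascPochhammer_pos k (2 - 2 * α) (by linarith)
    have : 0 < α * (1 - 2 * α) := by nlinarith
    positivity
  have hsqrt : (√r : ℂ) * (√r : ℂ) = ((α * (1 - 2 * α) / (2 * Real.cos (π * α)) : ℝ) : ℂ) *
      ((ascPochhammer ℂ k).eval (2 - 2 * (α : ℂ)) / k !) := by
    rw [← ofReal_mul, Real.mul_self_sqrt hr]
    simp only [r, ofReal_div, ofReal_mul, ofReal_ascPochhammer_eval, ofReal_natCast]
    push_cast
    ring
  have hconj2 : conj ((2 : ℂ) ^ ((α : ℂ) - 1)) = 2 ^ ((α : ℂ) - 1) := by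
    simpa [map_ofNat] using conj_cpow_ofReal (x := 2) (by simpa using pi_ne_zero.symm) (α - 1)
  have hconjw : conj (((w + I) / (2 * I)) ^ (2 * (α : ℂ) - 2)) =
      conj ((w + I) / (2 * I)) ^ (2 * (α : ℂ) - 2) := by
    have hslit : (w + I) / (2 * I) ∈ slitPlane := Or.inl (by rw [re_add_I_div_two_I]; linarith)
    simpa using conj_cpow_ofReal (slitPlane_arg_ne_pi hslit) (2 * α - 2)
  have h22 : (2 : ℂ) ^ ((α : ℂ) - 1) * 2 ^ ((α : ℂ) - 1) = 2 ^ (2 * (α : ℂ) - 2) := by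
    rw [← cpow_add _ _ two_ne_zero]; ring_nf
  simp only [afbmCoeff, map_mul, map_pow, conj_ofReal, hconj2, hconjw]
  calc _ = ((2 : ℂ) ^ ((α : ℂ) - 1) * 2 ^ ((α : ℂ) - 1)) * ((√r : ℂ) * (√r : ℂ)) *
        ((z + I) / (2 * I)) ^ (2 * (α : ℂ) - 2) * conj ((w + I) / (2 * I)) ^ (2 * (α : ℂ) - 2) *
        (((z - I) / (z + I)) ^ k * conj ((w - I) / (w + I)) ^ k) := by ring
    _ = _ := by rw [h22, hsqrt, ← mul_pow]; ring

/-- For `z, w` in the upper half-plane, `∑_k f_k(z) \overline{f_k(w)}` converges absolutely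
to `(α(1−2α)/(2 cos πα)) (−i(z − \bar w))^{2α−2}`. -/
theorem stmt3 (α : ℝ) (hα : α ∈ Set.Ioo (0 : ℝ) (1 / 2)) (z w : ℂ)
    (hz : 0 < z.im) (hw : 0 < w.im) :
    Summable (fun k => ‖afbmCoeff α k z * (starRingEnd ℂ) (afbmCoeff α k w)‖) ∧
    ∑' k, afbmCoeff α k z * (starRingEnd ℂ) (afbmCoeff α k w) =
      ((α * (1 - 2 * α) / (2 * Real.cos (π * α))) : ℂ) *
        (-I * (z - (starRingEnd ℂ) w)) ^ (2 * (α : ℂ) - 2) := by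
  have hq := norm_sub_I_div_add_I_mul_conj_lt_one hz hw
  simp only [afbmCoeff_mul_conj hα z hw]
  constructor
  · exact ((summable_norm_ascPochhammer_div_factorial_mul_pow _ hq).mul_left _).congr
      fun k => (norm_mul _ _).symm
  · rw [tsum_mul_left, (hasSum_ascPochhammer_div_factorial_mul_pow _ hq).tsum_eq,
      neg_I_mul_sub_conj_cpow hz hw, show -(2 - 2 * (α : ℂ)) = 2 * α - 2 by ring]
    push_cast
    ring
end

section
/- Let α ∈ (0,1/2), ε, η > 0, ρ ∈ (0,1), and z ∈ ℂ with Re z > 0. Then |(z+ε)^{2α−2} − (z+η)^{2α−2}| ≤ C |ε−η|^ρ |z|^{2α−2−ρ}, for a constant C depending only on α and ρ, where w^{2α−2} denotes the principal branch power on the right half-plane. -/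
open Complex

/-! On the right half-plane `‖z + t‖ ≥ ‖z‖` for `t ≥ 0`, so for a real exponent `p ≤ 0` the
difference `(z + a) ^ p - (z + b) ^ p` is bounded both by `2 ‖z‖ ^ p` (triangle inequality) and,
by the mean value theorem along the real segment, by `|p| |a - b| ‖z‖ ^ (p - 1)`. Interpolating
between the two, according to whether `‖z‖ ≤ |a - b|` or not, gives the Hölder bound. -/

namespace Complex

lemma norm_le_norm_add_ofReal {z : ℂ} (hz : 0 ≤ z.re) {t : ℝ} (ht : 0 ≤ t) :
    ‖z‖ ≤ ‖z + t‖ := by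
  rw [norm_def, norm_def]
  apply Real.sqrt_le_sqrt
  simp only [normSq_apply, add_re, add_im, ofReal_re, ofReal_im, add_zero]
  nlinarith

lemma add_ofReal_mem_slitPlane {z : ℂ} (hz : 0 < z.re) {t : ℝ} (ht : 0 ≤ t) :
    z + t ∈ slitPlane :=
  mem_slitPlane_iff.mpr (Or.inl (by simp only [add_re, ofReal_re]; linarith))

lemma norm_add_ofReal_cpow_le {z : ℂ} (hz : 0 < z.re) {t : ℝ} (ht : 0 ≤ t)
    {p : ℝ} (hp : p ≤ 0) : ‖(z + t) ^ (p : ℂ)‖ ≤ ‖z‖ ^ p := by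
  have hz0 : 0 < ‖z‖ := norm_pos_iff.mpr fun h ↦ by simp [h] at hz
  rw [norm_cpow_real]
  exact Real.rpow_le_rpow_of_nonpos hz0 (norm_le_norm_add_ofReal hz.le ht) hp

lemma norm_add_ofReal_cpow_sub_le {z : ℂ} (hz : 0 < z.re) {a b : ℝ} (ha : 0 ≤ a) (hb : 0 ≤ b)
    {p : ℝ} (hp : p ≤ 0) : ‖(z + a) ^ (p : ℂ) - (z + b) ^ (p : ℂ)‖ ≤ 2 * ‖z‖ ^ p := by
  calc ‖(z + a) ^ (p : ℂ) - (z + b) ^ (p : ℂ)‖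
      ≤ ‖(z + a) ^ (p : ℂ)‖ + ‖(z + b) ^ (p : ℂ)‖ := norm_sub_le _ _
    _ ≤ 2 * ‖z‖ ^ p := by
      linarith [norm_add_ofReal_cpow_le hz ha hp, norm_add_ofReal_cpow_le hz hb hp]

lemma norm_add_ofReal_cpow_sub_le_mul_abs {z : ℂ} (hz : 0 < z.re) {a b : ℝ} (ha : 0 ≤ a)
    (hb : 0 ≤ b) {p : ℝ} (hp : p ≤ 1) :
    ‖(z + a) ^ (p : ℂ) - (z + b) ^ (p : ℂ)‖ ≤ |p| * ‖z‖ ^ (p - 1) * |a - b| := by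
  have hnonneg : ∀ t ∈ Set.uIcc b a, 0 ≤ t := fun t ht ↦ (le_min hb ha).trans ht.1
  have hderiv : ∀ t ∈ Set.uIcc b a, HasDerivWithinAt (fun u : ℝ ↦ (z + u) ^ (p : ℂ))
      (p * (z + t) ^ ((p - 1 : ℝ) : ℂ)) (Set.uIcc b a) t := by
    intro t ht
    have h := (((hasDerivAt_id (t : ℂ)).const_add z).cpow_const (c := p)
      (add_ofReal_mem_slitPlane hz (hnonneg t ht))).comp_ofReal
    push_cast
    simpa using h.hasDerivWithinAt
  have hbound : ∀ t ∈ Set.uIcc b a, ‖(p : ℂ) * (z + t) ^ ((p - 1 : ℝ) : ℂ)‖ ≤ |p| * ‖z‖ ^ (p - 1) :=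
    fun t ht ↦ by
      rw [norm_mul, norm_real, Real.norm_eq_abs]
      exact mul_le_mul_of_nonneg_left
        (norm_add_ofReal_cpow_le hz (hnonneg t ht) (by linarith)) (abs_nonneg p)
  simpa [Real.norm_eq_abs] using (convex_uIcc b a).norm_image_sub_le_of_norm_hasDerivWithin_le
    hderiv hbound Set.left_mem_uIcc Set.right_mem_uIcc

end Complex

lemma Real.min_rpow_mul_rpow_sub_one_le {r d : ℝ} (hr : 0 < r) (hd : 0 ≤ d) (p : ℝ) {ρ : ℝ}
    (hρ₀ : 0 ≤ ρ) (hρ₁ : ρ ≤ 1) : min (r ^ p) (d * r ^ (p - 1)) ≤ d ^ ρ * r ^ (p - ρ) := by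
  rcases le_total r d with hrd | hdr
  · calc min (r ^ p) (d * r ^ (p - 1)) ≤ r ^ p := min_le_left _ _
      _ = r ^ ρ * r ^ (p - ρ) := by rw [← Real.rpow_add hr, add_sub_cancel]
      _ ≤ d ^ ρ * r ^ (p - ρ) := by gcongr
  · calc min (r ^ p) (d * r ^ (p - 1)) ≤ d * r ^ (p - 1) := min_le_right _ _
      _ = d ^ ρ * (d ^ (1 - ρ) * r ^ (p - 1)) := by
        rw [← mul_assoc, ← Real.rpow_add' hd (by norm_num), add_sub_cancel, Real.rpow_one]
      _ ≤ d ^ ρ * (r ^ (1 - ρ) * r ^ (p - 1)) := by gcongr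
      _ = d ^ ρ * r ^ (p - ρ) := by rw [← Real.rpow_add hr]; ring_nf

theorem Complex.norm_add_ofReal_cpow_sub_le_holder {z : ℂ} (hz : 0 < z.re) {a b : ℝ}
    (ha : 0 ≤ a) (hb : 0 ≤ b) {p ρ : ℝ} (hp : p ≤ 0) (hρ₀ : 0 ≤ ρ) (hρ₁ : ρ ≤ 1) :
    ‖(z + a) ^ (p : ℂ) - (z + b) ^ (p : ℂ)‖ ≤ max 2 |p| * |a - b| ^ ρ * ‖z‖ ^ (p - ρ) := by
  have hz0 : 0 < ‖z‖ := norm_pos_iff.mpr fun h ↦ by simp [h] at hz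
  calc ‖(z + a) ^ (p : ℂ) - (z + b) ^ (p : ℂ)‖
      ≤ max 2 |p| * min (‖z‖ ^ p) (|a - b| * ‖z‖ ^ (p - 1)) := by
        rw [mul_min_of_nonneg _ _ (by positivity)]
        apply le_min
        · exact (norm_add_ofReal_cpow_sub_le hz ha hb hp).trans (by gcongr; exact le_max_left _ _)
        · calc _ ≤ |p| * (|a - b| * ‖z‖ ^ (p - 1)) :=
                (norm_add_ofReal_cpow_sub_le_mul_abs hz ha hb (by linarith)).trans_eq (by ring)
            _ ≤ _ := by gcongr; exact le_max_right _ _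
    _ ≤ max 2 |p| * (|a - b| ^ ρ * ‖z‖ ^ (p - ρ)) := by
        gcongr
        exact Real.min_rpow_mul_rpow_sub_one_le hz0 (abs_nonneg _) p hρ₀ hρ₁
    _ = max 2 |p| * |a - b| ^ ρ * ‖z‖ ^ (p - ρ) := by ring

/-- For `Re z > 0`, `|(z+ε)^{2α−2} − (z+η)^{2α−2}| ≤ C |ε−η|^ρ |z|^{2α−2−ρ}`,
with `C` depending only on `α ∈ (0,1/2)` and `ρ ∈ (0,1)`. -/
theorem stmt4 (α ρ : ℝ) (hα : α ∈ Set.Ioo (0 : ℝ) (1 / 2)) (hρ : ρ ∈ Set.Ioo (0 : ℝ) 1) :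
    ∃ C > 0, ∀ ε η : ℝ, 0 < ε → 0 < η → ∀ z : ℂ, 0 < z.re →
      ‖(z + ε) ^ (2 * (α : ℂ) - 2) - (z + η) ^ (2 * (α : ℂ) - 2)‖
        ≤ C * |ε - η| ^ ρ * ‖z‖ ^ (2 * α - 2 - ρ) := by
  refine ⟨max 2 |2 * α - 2|, by positivity, fun ε η hε hη z hz ↦ ?_⟩
  have hexp : 2 * (α : ℂ) - 2 = ((2 * α - 2 : ℝ) : ℂ) := by push_cast; rfl
  rw [hexp]
  exact norm_add_ofReal_cpow_sub_le_holder hz hε.le hη.le (by linarith [hα.2]) hρ.1.le hρ.2.le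
end

section
/- Let α ∈ (0,1/2), T > 0, and ρ ∈ (0,2α). Then there exists C_ρ > 0 such that for all s ∈ ℂ with Im s ≥ 0, all L > 0, and all ε > η > 0, one has ∫_0^L ∫_0^L |(2 Im s + x + y + 2ε)^{2α−2} − (2 Im s + x + y + ε+η)^{2α−2}| dx dy ≤ C_ρ L^{2α−ρ} (ε−η)^ρ. -/
open MeasureTheory

/-! With `u = 2 Im s + x + y + ε + η`, `δ = ε - η` and `β = 2α - 2`, the integrand is
`|(u + δ)^β - u^β|`. Interpolating between the trivial bound `u^β` and the mean-value bound
`|β| u^(β-1) δ` bounds it by `|β|^ρ δ^ρ u^(β-ρ) ≤ |β|^ρ δ^ρ (x + y)^(β-ρ)`, and since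
`-2 < β - ρ < -1`, integrating first in `y` and then in `x` gives
`∫∫_{[0,L]²} (x + y)^(β-ρ) ≤ L^(2α-ρ) / ((1 + ρ - 2α) (2α - ρ))`. -/

open Set intervalIntegral

namespace Real

lemma le_rpow_mul_rpow_of_le_of_le {d a b θ : ℝ} (hd : 0 ≤ d) (ha : d ≤ a) (hb : d ≤ b)
    (hθ₀ : 0 ≤ θ) (hθ₁ : θ ≤ 1) : d ≤ a ^ (1 - θ) * b ^ θ :=
  calc d = d ^ (1 - θ) * d ^ θ := by rw [← rpow_add' hd (by norm_num), sub_add_cancel, rpow_one]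
    _ ≤ a ^ (1 - θ) * b ^ θ :=
      mul_le_mul (rpow_le_rpow hd ha (by linarith)) (rpow_le_rpow hd hb hθ₀) (rpow_nonneg hd _)
        (rpow_nonneg (hd.trans ha) _)

lemma rpow_sub_rpow_add_le {β u δ : ℝ} (hβ : β ≤ 0) (hu : 0 < u) (hδ : 0 ≤ δ) :
    u ^ β - (u + δ) ^ β ≤ -β * u ^ (β - 1) * δ := by
  have hpos : ∀ t ∈ Ici u, 0 < t := fun t ht => hu.trans_le ht
  have key := (convex_Ici u).mul_sub_le_image_sub_of_le_deriv (f := fun t => t ^ β)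
    (C := β * u ^ (β - 1))
    (fun t ht => (continuousAt_rpow_const _ _ (Or.inl (hpos t ht).ne')).continuousWithinAt)
    (fun t ht => (differentiableAt_rpow_const_of_ne _
      (hpos t (interior_subset ht)).ne').differentiableWithinAt)
    (fun t ht => by
      rw [interior_Ici] at ht
      rw [deriv_rpow_const]
      exact mul_le_mul_of_nonpos_left (rpow_le_rpow_of_nonpos hu ht.le (by linarith)) hβ)
    u self_mem_Ici (u + δ) (by simpa using hδ) (by linarith)
  rw [add_sub_cancel_left] at key
  linarith

lemma abs_rpow_add_sub_rpow_le {β θ u δ : ℝ} (hβ : β ≤ 0) (hθ₀ : 0 ≤ θ) (hθ₁ : θ ≤ 1)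
    (hu : 0 < u) (hδ : 0 ≤ δ) :
    |(u + δ) ^ β - u ^ β| ≤ (-β) ^ θ * δ ^ θ * u ^ (β - θ) := by
  have hmono : (u + δ) ^ β ≤ u ^ β := rpow_le_rpow_of_nonpos hu (by linarith) hβ
  rw [abs_sub_comm, abs_of_nonneg (sub_nonneg.2 hmono)]
  calc u ^ β - (u + δ) ^ β ≤ (u ^ β) ^ (1 - θ) * (-β * u ^ (β - 1) * δ) ^ θ :=
        le_rpow_mul_rpow_of_le_of_le (sub_nonneg.2 hmono)
          (by linarith [rpow_nonneg (hu.le.trans (le_add_of_nonneg_right hδ)) β])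
          (rpow_sub_rpow_add_le hβ hu hδ) hθ₀ hθ₁
    _ = (-β) ^ θ * δ ^ θ * u ^ (β * (1 - θ) + (β - 1) * θ) := by
        rw [mul_rpow (mul_nonneg (neg_nonneg.2 hβ) (rpow_nonneg hu.le _)) hδ,
          mul_rpow (by linarith) (by positivity), ← rpow_mul hu.le, ← rpow_mul hu.le, rpow_add hu]
        ring
    _ = (-β) ^ θ * δ ^ θ * u ^ (β - θ) := by ring_nf

end Real

/-- No integrability of `f` is needed: a non-integrable `f` has integral `0`. -/
lemma intervalIntegral.integral_mono_of_nonneg_on {f g : ℝ → ℝ} {a b : ℝ} (hab : a ≤ b)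
    (hf : ∀ x ∈ Ioc a b, 0 ≤ f x) (hg : IntervalIntegrable g volume a b)
    (hfg : ∀ x ∈ Ioc a b, f x ≤ g x) : ∫ x in a..b, f x ≤ ∫ x in a..b, g x := by
  rw [integral_of_le hab, integral_of_le hab]
  exact integral_mono_of_nonneg (ae_restrict_of_forall_mem measurableSet_Ioc hf) hg.1
    (ae_restrict_of_forall_mem measurableSet_Ioc hfg)

lemma integral_rpow_add_le {e x L : ℝ} (he : e < -1) (hx : 0 < x) (hL : 0 ≤ L) :
    ∫ y in 0..L, (x + y) ^ e ≤ x ^ (e + 1) / -(e + 1) := by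
  rw [integral_comp_add_left (· ^ e) x, add_zero,
    integral_rpow (Or.inr ⟨by linarith, notMem_uIcc_of_lt hx (by linarith)⟩), div_neg,
    ← neg_div]
  exact div_le_div_of_nonpos_of_le (by linarith)
    (by linarith [Real.rpow_nonneg (by linarith : 0 ≤ x + L) (e + 1)])

lemma intervalIntegrable_rpow_add {e x L : ℝ} (hx : 0 < x) (hL : 0 ≤ L) :
    IntervalIntegrable (fun y => (x + y) ^ e) volume 0 L :=
  ContinuousOn.intervalIntegrable <| ContinuousOn.rpow_const (by fun_prop) fun y hy =>
    Or.inl (by rw [uIcc_of_le hL] at hy; linarith [hy.1])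

theorem integral_integral_le_of_le_rpow_add {f : ℝ → ℝ → ℝ} {M e L : ℝ} (he₁ : -2 < e)
    (he₂ : e < -1) (hM : 0 ≤ M) (hL : 0 ≤ L)
    (hf₀ : ∀ x ∈ Ioc 0 L, ∀ y ∈ Ioc 0 L, 0 ≤ f x y)
    (hf : ∀ x ∈ Ioc 0 L, ∀ y ∈ Ioc 0 L, f x y ≤ M * (x + y) ^ e) :
    ∫ x in 0..L, ∫ y in 0..L, f x y ≤ M / (-(e + 1) * (e + 2)) * L ^ (e + 2) := by
  have inner : ∀ x ∈ Ioc 0 L, ∫ y in 0..L, f x y ≤ M / -(e + 1) * x ^ (e + 1) := by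
    intro x hx
    calc ∫ y in 0..L, f x y ≤ ∫ y in 0..L, M * (x + y) ^ e :=
          integral_mono_of_nonneg_on hL (hf₀ x hx)
            ((intervalIntegrable_rpow_add hx.1 hL).const_mul M) (hf x hx)
      _ ≤ M * (x ^ (e + 1) / -(e + 1)) := by
          rw [intervalIntegral.integral_const_mul]
          exact mul_le_mul_of_nonneg_left (integral_rpow_add_le he₂ hx.1 hL) hM
      _ = M / -(e + 1) * x ^ (e + 1) := by ring
  calc ∫ x in 0..L, ∫ y in 0..L, f x y ≤ ∫ x in 0..L, M / -(e + 1) * x ^ (e + 1) :=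
        integral_mono_of_nonneg_on hL
          (fun x hx => by
            rw [integral_of_le hL]
            exact setIntegral_nonneg measurableSet_Ioc (hf₀ x hx))
          ((intervalIntegrable_rpow' (by linarith)).const_mul _) inner
    _ = M / (-(e + 1) * (e + 2)) * L ^ (e + 2) := by
        rw [intervalIntegral.integral_const_mul, integral_rpow (Or.inl (by linarith)),
          show e + 1 + 1 = e + 2 by ring, Real.zero_rpow (by linarith), sub_zero]
        field_simp

/-- For `ρ ∈ (0, 2α)`, the double integral of
`|(2 Im s + x + y + 2ε)^{2α−2} − (2 Im s + x + y + ε+η)^{2α−2}|` over `[0,L]²`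
is bounded by `C_ρ L^{2α−ρ} (ε−η)^ρ`. -/
theorem stmt5 (α ρ : ℝ) (hα : α ∈ Set.Ioo (0 : ℝ) (1 / 2)) (hρ : ρ ∈ Set.Ioo 0 (2 * α)) :
    ∃ C > 0, ∀ s : ℂ, 0 ≤ s.im → ∀ L : ℝ, 0 < L → ∀ ε η : ℝ, 0 < η → η < ε →
      (∫ x in (0:ℝ)..L, ∫ y in (0:ℝ)..L,
        |(2 * s.im + x + y + 2 * ε) ^ (2 * α - 2)
          - (2 * s.im + x + y + ε + η) ^ (2 * α - 2)|)
        ≤ C * L ^ (2 * α - ρ) * (ε - η) ^ ρ := by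
  obtain ⟨-, hα⟩ := hα
  obtain ⟨hρ₀, hρ⟩ := hρ
  refine ⟨(2 - 2 * α) ^ ρ / ((1 + ρ - 2 * α) * (2 * α - ρ)),
    div_pos (Real.rpow_pos_of_pos (by linarith) ρ) (by nlinarith), ?_⟩
  intro s hs L hL ε η hη hηε
  have hM : 0 ≤ (2 - 2 * α) ^ ρ * (ε - η) ^ ρ :=
    mul_nonneg (Real.rpow_nonneg (by linarith) _) (Real.rpow_nonneg (by linarith) _)
  have hbound : ∀ x ∈ Ioc 0 L, ∀ y ∈ Ioc 0 L,
      |(2 * s.im + x + y + 2 * ε) ^ (2 * α - 2) - (2 * s.im + x + y + ε + η) ^ (2 * α - 2)|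
        ≤ (2 - 2 * α) ^ ρ * (ε - η) ^ ρ * (x + y) ^ (2 * α - 2 - ρ) := by
    intro x hx y hy
    have hxy : 0 < x + y := by linarith [hx.1, hy.1]
    calc _ = |((2 * s.im + x + y + ε + η) + (ε - η)) ^ (2 * α - 2)
              - (2 * s.im + x + y + ε + η) ^ (2 * α - 2)| := by ring_nf
      _ ≤ (-(2 * α - 2)) ^ ρ * (ε - η) ^ ρ * (2 * s.im + x + y + ε + η) ^ (2 * α - 2 - ρ) :=
          Real.abs_rpow_add_sub_rpow_le (by linarith) hρ₀.le (by linarith) (by linarith)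
            (by linarith)
      _ ≤ (2 - 2 * α) ^ ρ * (ε - η) ^ ρ * (x + y) ^ (2 * α - 2 - ρ) := by
          rw [neg_sub]
          exact mul_le_mul_of_nonneg_left
            (Real.rpow_le_rpow_of_nonpos hxy (by linarith [hs]) (by linarith)) hM
  calc _ ≤ (2 - 2 * α) ^ ρ * (ε - η) ^ ρ / (-(2 * α - 2 - ρ + 1) * (2 * α - 2 - ρ + 2))
          * L ^ (2 * α - 2 - ρ + 2) :=
        integral_integral_le_of_le_rpow_add (by linarith) (by linarith) hM hL.le
          (fun _ _ _ _ => abs_nonneg _) hbound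
    _ = _ := by
        rw [show 2 * α - 2 - ρ + 2 = 2 * α - ρ by ring,
          show -(2 * α - 2 - ρ + 1) = 1 + ρ - 2 * α by ring]
        ring
end

section
/- Let α ∈ (0,1/2). There exists a constant c > 0 such that for every piecewise C¹ continuous path γ : [0,1] → Π⁺ (the open upper half-plane), |∫_γ dz ∫_{\bar γ} d\bar{w} (−i(z − \bar{w}))^{2α−2}| ≤ c |γ(1) − γ(0)|^{2α}, where \bar γ denotes the complex-conjugate path and ζ^{2α−2} is the principal branch power (well-defined since Re(−i(z−\bar w)) > 0 for z,w ∈ Π⁺). -/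
/-!
Put `ζ(u, v) = -i γ(u) + i conj (γ(v))`. The integrand is `ζ ^ (2α - 2) ∂ᵤζ ∂ᵥζ`, so integrating
first in `v` and then in `u` evaluates the double integral exactly as the second difference
`(ζ(1,1)^{2α} - ζ(0,1)^{2α} - ζ(1,0)^{2α} + ζ(0,0)^{2α}) / (2α (2α - 1))`.
Since `Re ζ = Im γ(u) + Im γ(v) > 0` and `ζ(1, v) - ζ(0, v) = -i (γ(1) - γ(0))`, it remains to use
that `z ↦ z ^ σ` is `σ`-Hölder on the right half-plane: near the origin both powers are
`O(‖z - w‖ ^ σ)`, and away from it the mean value inequality applies along the segment.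
-/
open Complex MeasureTheory Set
open scoped Interval ComplexConjugate

theorem norm_cpow_sub_cpow_le_of_norm_le {σ : ℝ} (hσ0 : 0 ≤ σ) (hσ1 : σ ≤ 1) {z w : ℂ}
    (hz : ‖z‖ ≤ 2 * ‖z - w‖) : ‖z ^ (σ : ℂ) - w ^ (σ : ℂ)‖ ≤ 6 * ‖z - w‖ ^ σ := by
  set d := ‖z - w‖
  have hw : ‖w‖ ≤ 3 * d := by
    have := norm_le_norm_add_norm_sub' w z
    rw [norm_sub_rev] at this
    linarith
  have h3 : (3 : ℝ) ^ σ ≤ 3 := Real.rpow_le_self_of_one_le (by norm_num) hσ1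
  calc ‖z ^ (σ : ℂ) - w ^ (σ : ℂ)‖ ≤ ‖z‖ ^ σ + ‖w‖ ^ σ := by
        simpa only [norm_cpow_real] using norm_sub_le (z ^ (σ : ℂ)) (w ^ (σ : ℂ))
    _ ≤ (3 * d) ^ σ + (3 * d) ^ σ := by gcongr; linarith [norm_nonneg (z - w)]
    _ = 2 * 3 ^ σ * d ^ σ := by rw [Real.mul_rpow (by norm_num) (norm_nonneg _)]; ring
    _ ≤ 6 * d ^ σ := by nlinarith [Real.rpow_nonneg (norm_nonneg (z - w)) σ]

theorem norm_cpow_sub_cpow_le_of_two_mul_lt {σ : ℝ} (hσ0 : 0 ≤ σ) (hσ1 : σ ≤ 1) {z w : ℂ}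
    (hz : 0 < z.re) (hw : 0 < w.re) (hzw : 2 * ‖z - w‖ < ‖z‖) :
    ‖z ^ (σ : ℂ) - w ^ (σ : ℂ)‖ ≤ σ * ‖z - w‖ ^ σ := by
  rcases eq_or_ne z w with rfl | hne
  · simp only [sub_self, norm_zero]
    positivity
  set d := ‖z - w‖
  have hd : 0 < d := norm_pos_iff.2 (sub_ne_zero.2 hne)
  have hre : ∀ y ∈ segment ℝ w z, 0 < y.re := fun y hy =>
    (convex_halfSpace_re_gt 0).segment_subset hw hz hy
  have hnorm : ∀ y ∈ segment ℝ w z, d ≤ ‖y‖ := fun y hy => by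
    have h1 := norm_sub_le_of_mem_segment (segment_symm ℝ w z ▸ hy)
    rw [norm_sub_rev y, norm_sub_rev w] at h1
    linarith [norm_le_norm_add_norm_sub' z y]
  have hderiv : ∀ y ∈ segment ℝ w z,
      HasDerivWithinAt (fun y : ℂ => y ^ (σ : ℂ)) (σ * y ^ ((σ : ℂ) - 1)) (segment ℝ w z) y :=
    fun y hy => (hasStrictDerivAt_cpow_const
      (mem_slitPlane_iff.2 (.inl (hre y hy)))).hasDerivAt.hasDerivWithinAt
  have hbound : ∀ y ∈ segment ℝ w z, ‖(σ : ℂ) * y ^ ((σ : ℂ) - 1)‖ ≤ σ * d ^ (σ - 1) := by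
    intro y hy
    rw [norm_mul, norm_real, Real.norm_of_nonneg hσ0, ← ofReal_one, ← ofReal_sub, norm_cpow_real]
    exact mul_le_mul_of_nonneg_left
      (Real.rpow_le_rpow_of_nonpos hd (hnorm y hy) (by linarith)) hσ0
  have hmvt := (convex_segment w z).norm_image_sub_le_of_norm_hasDerivWithin_le hderiv hbound
    (left_mem_segment ℝ w z) (right_mem_segment ℝ w z)
  calc ‖z ^ (σ : ℂ) - w ^ (σ : ℂ)‖ ≤ σ * d ^ (σ - 1) * d := hmvt
    _ = σ * d ^ σ := by rw [Real.rpow_sub_one hd.ne']; field_simp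

theorem norm_cpow_sub_cpow_le {σ : ℝ} (hσ0 : 0 ≤ σ) (hσ1 : σ ≤ 1) {z w : ℂ}
    (hz : 0 < z.re) (hw : 0 < w.re) : ‖z ^ (σ : ℂ) - w ^ (σ : ℂ)‖ ≤ 6 * ‖z - w‖ ^ σ := by
  rcases le_or_gt ‖z‖ (2 * ‖z - w‖) with h | h
  · exact norm_cpow_sub_cpow_le_of_norm_le hσ0 hσ1 h
  · refine (norm_cpow_sub_cpow_le_of_two_mul_lt hσ0 hσ1 hz hw h).trans ?_
    gcongr
    linarith

theorem integral_cpow_sub_one_mul_deriv {g g' : ℝ → ℂ} {a b : ℝ} {s : Set ℝ} (hs : s.Countable)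
    (hc : ContinuousOn g [[a, b]]) (hd : ∀ x ∈ Ioo (min a b) (max a b) \ s, HasDerivAt g (g' x) x)
    (hi : IntervalIntegrable g' volume a b) (hg : ∀ x ∈ [[a, b]], g x ∈ slitPlane)
    {r : ℂ} (hr : r ≠ 0) :
    ∫ x in a..b, g x ^ (r - 1) * g' x = (g b ^ r - g a ^ r) / r := by
  have hderiv : ∀ x ∈ Ioo (min a b) (max a b) \ s,
      HasDerivAt (fun x => g x ^ r / r) (g x ^ (r - 1) * g' x) x := fun x hx => by
    have hpow := (hasStrictDerivAt_cpow_const (c := r) (hg x (Ioo_subset_Icc_self hx.1))).hasDerivAt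
    refine ((hpow.comp x (hd x hx)).div_const r).congr_deriv ?_
    rw [mul_assoc, mul_div_cancel_left₀ _ hr]
  rw [integral_eq_of_hasDerivAt_off_countable _ _ hs ((hc.cpow_const hg).div_const r) hderiv
    (hi.continuousOn_mul (hc.cpow_const hg)), sub_div]

theorem integral_integral_add_cpow_mul_deriv {p p' q q' : ℝ → ℂ} {a b c d : ℝ} {s t : Set ℝ}
    (hs : s.Countable) (hpc : ContinuousOn p [[a, b]])
    (hpd : ∀ x ∈ Ioo (min a b) (max a b) \ s, HasDerivAt p (p' x) x)
    (hpi : IntervalIntegrable p' volume a b)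
    (ht : t.Countable) (hqc : ContinuousOn q [[c, d]])
    (hqd : ∀ y ∈ Ioo (min c d) (max c d) \ t, HasDerivAt q (q' y) y)
    (hqi : IntervalIntegrable q' volume c d)
    (hslit : ∀ x ∈ [[a, b]], ∀ y ∈ [[c, d]], p x + q y ∈ slitPlane)
    {r : ℂ} (hr₀ : r ≠ 0) (hr₁ : r ≠ 1) :
    ∫ x in a..b, ∫ y in c..d, (p x + q y) ^ (r - 2) * p' x * q' y =
      ((p b + q d) ^ r - (p a + q d) ^ r - ((p b + q c) ^ r - (p a + q c) ^ r)) /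
        (r * (r - 1)) := by
  have hr₁' : r - 1 ≠ 0 := sub_ne_zero.2 hr₁
  have hinner : ∀ x ∈ [[a, b]], ∫ y in c..d, (p x + q y) ^ (r - 2) * p' x * q' y =
      ((p x + q d) ^ (r - 1) * p' x - (p x + q c) ^ (r - 1) * p' x) / (r - 1) := by
    intro x hx
    have := integral_cpow_sub_one_mul_deriv (g := fun y => p x + q y) ht
      (continuousOn_const.add hqc) (fun y hy => (hqd y hy).const_add (p x)) hqi (hslit x hx) hr₁'
    simp only [sub_sub, one_add_one_eq_two] at this
    simp only [mul_right_comm _ (p' x), intervalIntegral.integral_mul_const, this]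
    ring
  have houter : ∀ y ∈ [[c, d]], ∫ x in a..b, (p x + q y) ^ (r - 1) * p' x =
      ((p b + q y) ^ r - (p a + q y) ^ r) / r := fun y hy =>
    integral_cpow_sub_one_mul_deriv (g := fun x => p x + q y) hs (hpc.add continuousOn_const)
      (fun x hx => (hpd x hx).add_const (q y)) hpi (fun x hx => hslit x hx y hy) hr₀
  have hint : ∀ y ∈ [[c, d]],
      IntervalIntegrable (fun x => (p x + q y) ^ (r - 1) * p' x) volume a b :=
    fun y hy => hpi.continuousOn_mul
      ((hpc.add continuousOn_const).cpow_const fun x hx => hslit x hx y hy)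
  rw [intervalIntegral.integral_congr hinner, intervalIntegral.integral_div,
    intervalIntegral.integral_sub (hint d right_mem_uIcc) (hint c left_mem_uIcc),
    houter d right_mem_uIcc, houter c left_mem_uIcc]
  field_simp

theorem IntervalIntegrable.conj {f : ℝ → ℂ} {μ : Measure ℝ} {a b : ℝ}
    (hf : IntervalIntegrable f μ a b) : IntervalIntegrable (fun x => conj (f x)) μ a b :=
  ⟨conjCLE.toContinuousLinearMap.integrable_comp hf.1,
    conjCLE.toContinuousLinearMap.integrable_comp hf.2⟩

theorem re_neg_I_mul_sub_conj (z w : ℂ) : (-I * (z - conj w)).re = z.im + w.im := by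
  simp

theorem integral_integral_neg_I_mul_sub_conj_cpow {γ γ' : ℝ → ℂ} {a b : ℝ} {s : Set ℝ}
    (hs : s.Countable) (hc : ContinuousOn γ [[a, b]])
    (hd : ∀ x ∈ Ioo (min a b) (max a b) \ s, HasDerivAt γ (γ' x) x)
    (hi : IntervalIntegrable γ' volume a b) (him : ∀ x ∈ [[a, b]], 0 < (γ x).im)
    {r : ℂ} (hr₀ : r ≠ 0) (hr₁ : r ≠ 1) :
    ∫ u in a..b, ∫ v in a..b, (-I * (γ u - conj (γ v))) ^ (r - 2) * γ' u * conj (γ' v) =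
      ((-I * (γ b - conj (γ b))) ^ r - (-I * (γ a - conj (γ b))) ^ r -
        ((-I * (γ b - conj (γ a))) ^ r - (-I * (γ a - conj (γ a))) ^ r)) / (r * (r - 1)) := by
  have hζ : ∀ u v, -I * γ u + I * conj (γ v) = -I * (γ u - conj (γ v)) := fun u v => by ring
  have hI : ∀ x y z : ℂ, x * (-I * y) * (I * z) = x * y * z := fun x y z => by
    ring_nf
    rw [I_sq]
    ring
  have key := integral_integral_add_cpow_mul_deriv
    (p := fun u => -I * γ u) (p' := fun u => -I * γ' u)
    (q := fun v => I * conj (γ v)) (q' := fun v => I * conj (γ' v))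
    hs (continuousOn_const.mul hc) (fun u hu => (hd u hu).const_mul _) (hi.const_mul _)
    hs (continuousOn_const.mul hc.star) (fun v hv => (hd v hv).star.const_mul I)
    (hi.conj.const_mul I)
    (fun u hu v hv => mem_slitPlane_iff.2 <| .inl <| by
      simpa only [hζ, re_neg_I_mul_sub_conj] using add_pos (him u hu) (him v hv))
    hr₀ hr₁
  simpa only [hζ, hI] using key

theorem norm_cpow_neg_I_mul_sub_conj_sub_le {σ : ℝ} (hσ0 : 0 ≤ σ) (hσ1 : σ ≤ 1) {z z' w : ℂ}
    (hz : 0 < z.im) (hz' : 0 < z'.im) (hw : 0 < w.im) :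
    ‖(-I * (z - conj w)) ^ (σ : ℂ) - (-I * (z' - conj w)) ^ (σ : ℂ)‖ ≤ 6 * ‖z - z'‖ ^ σ := by
  have hdiff : -I * (z - conj w) - -I * (z' - conj w) = -I * (z - z') := by ring
  simpa only [hdiff, norm_mul, norm_neg, norm_I, one_mul] using
    norm_cpow_sub_cpow_le hσ0 hσ1 (z := -I * (z - conj w)) (w := -I * (z' - conj w))
      (by rw [re_neg_I_mul_sub_conj]; positivity) (by rw [re_neg_I_mul_sub_conj]; positivity)

/-- Contour bound: for any piecewise `C¹` path `γ` in the open upper half-plane,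
`|∫_γ dz ∫_{\bar γ} d\bar w (−i(z−\bar w))^{2α−2}| ≤ c |γ(1)−γ(0)|^{2α}`. -/
theorem stmt6 (α : ℝ) (hα : α ∈ Set.Ioo (0 : ℝ) (1 / 2)) :
    ∃ c > 0, ∀ (γ γ' : ℝ → ℂ) (S : Finset ℝ),
      ContinuousOn γ (Set.Icc 0 1) →
      (∀ t ∈ Set.Icc (0 : ℝ) 1 \ (S : Set ℝ), HasDerivAt γ (γ' t) t) →
      IntervalIntegrable γ' volume 0 1 →
      (∀ t ∈ Set.Icc (0 : ℝ) 1, 0 < (γ t).im) →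
      ‖(∫ u in (0:ℝ)..1, ∫ v in (0:ℝ)..1,
          (-I * (γ u - (starRingEnd ℂ) (γ v))) ^ (2 * (α : ℂ) - 2)
            * γ' u * (starRingEnd ℂ) (γ' v))‖
        ≤ c * ‖γ 1 - γ 0‖ ^ (2 * α) := by
  obtain ⟨hα₀, hα₁⟩ := hα
  have hσ : 2 * (α : ℂ) = ((2 * α : ℝ) : ℂ) := by push_cast; ring
  have hpos : 0 < 2 * α * (1 - 2 * α) := by nlinarith
  have hden : ‖2 * (α : ℂ) * (2 * (α : ℂ) - 1)‖ = 2 * α * (1 - 2 * α) := by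
    rw [hσ, ← ofReal_one, ← ofReal_sub, ← ofReal_mul, norm_real, Real.norm_eq_abs,
      abs_of_neg (by nlinarith)]
    ring
  refine ⟨12 / (2 * α * (1 - 2 * α)), div_pos (by norm_num) hpos, ?_⟩
  intro γ γ' S hγc hγd hγ'i him
  rw [← uIcc_of_le zero_le_one] at hγc him
  have hγd' : ∀ t ∈ Ioo (min 0 1) (max 0 1) \ (S : Set ℝ), HasDerivAt γ (γ' t) t := by
    simpa only [zero_le_one, min_eq_left, max_eq_right] using
      fun t ht => hγd t ⟨Ioo_subset_Icc_self ht.1, ht.2⟩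
  have hcorner (v : ℝ) (hv : v ∈ [[(0 : ℝ), 1]]) := hσ ▸ norm_cpow_neg_I_mul_sub_conj_sub_le
    (by linarith) (by linarith) (him 1 right_mem_uIcc) (him 0 left_mem_uIcc) (him v hv)
  rw [integral_integral_neg_I_mul_sub_conj_cpow S.countable_toSet hγc hγd' hγ'i him
    (by rw [hσ]; exact_mod_cast (by linarith : 2 * α ≠ 0))
    (by rw [hσ]; exact_mod_cast (by linarith : 2 * α ≠ 1)),
    norm_div, hden, div_le_iff₀ hpos]
  refine (norm_sub_le _ _).trans
    ((add_le_add (hcorner 1 right_mem_uIcc) (hcorner 0 left_mem_uIcc)).trans_eq ?_)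
  rw [div_mul_eq_mul_div, div_mul_cancel₀ _ hpos.ne']
  ring
end

section
/- Let α ∈ (0,1/2) and let Γ be a centered complex Gaussian process on Π⁺ whose derivative Γ' has covariance E[Γ'_z \overline{Γ'_w}] = (α(1−2α)/(2cos πα)) (−i(z−\bar w))^{2α−2} and E[Γ'_z Γ'_w] = 0. Define Γ^ε_t = Γ_{t+iε}. Then there exists a constant c (independent of ε, η, s, t) such that for all ε, η > 0 and s,t with Im s, Im t ≥ 0: E[|Γ^ε_t − Γ^ε_s|²] ≤ c|t−s|^{2α} and E[|Γ^ε_t − Γ^η_t|²] ≤ c|ε−η|^{2α}. -/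
/-! The covariance hypothesis expresses `E|Γ_z − Γ_w|²` through a double integral over the segment
from `w` to `z` of a power of a function that is affine in both parameters, so it integrates in
closed form to
`((−i(z − z̄))^{2α} − (−i(w − z̄))^{2α} − (−i(z − w̄))^{2α} + (−i(w − w̄))^{2α}) / ((2α − 1) 2α)`.
The two differences here are increments by `−i(z − w)` of `ζ ↦ ζ^{2α}` on the right half-plane,
where this power is `2α`-Hölder; hence `E|Γ_z − Γ_w|² ≤ (3 / cos πα) |z − w|^{2α}`, and the two
estimates are the cases `w = s + iε` and `z = t + iε`, `w = t + iη`. -/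

open Complex MeasureTheory ComplexConjugate

section AffinePaths

variable {a b σ : ℂ}

theorem integral_cpow_affine (hb : b ≠ 0) (hσ : σ ≠ 0)
    (hslit : ∀ u ∈ Set.Icc (0:ℝ) 1, a + u * b ∈ slitPlane) :
    ∫ u in (0:ℝ)..1, (a + u * b) ^ (σ - 1) = ((a + b) ^ σ - a ^ σ) / (σ * b) := by
  rw [Set.uIcc_of_le zero_le_one |>.symm] at hslit
  have hderiv : ∀ u ∈ Set.uIcc (0:ℝ) 1,
      HasDerivAt (fun u : ℝ => (a + u * b) ^ σ / (σ * b)) ((a + u * b) ^ (σ - 1)) u := by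
    intro u hu
    have hpath : HasDerivAt (fun u : ℝ => a + (u:ℂ) * b) b u := by
      simpa using (ofRealCLM.hasDerivAt (x := u)).mul_const b |>.const_add a
    refine (((hasStrictDerivAt_cpow_const (c := σ) (hslit u hu)).hasDerivAt.comp u hpath
      ).div_const (σ * b)).congr_deriv ?_
    field_simp
  have hcont : ContinuousOn (fun u : ℝ => (a + u * b) ^ (σ - 1)) (Set.uIcc 0 1) :=
    ContinuousOn.cpow_const (by fun_prop) hslit
  rw [intervalIntegral.integral_eq_sub_of_hasDerivAt hderiv hcont.intervalIntegrable]
  simp only [ofReal_one, ofReal_zero, one_mul, zero_mul, add_zero, sub_div]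

theorem intervalIntegrable_cpow_affine
    (hslit : ∀ u ∈ Set.Icc (0:ℝ) 1, a + u * b ∈ slitPlane) :
    IntervalIntegrable (fun u : ℝ => (a + u * b) ^ σ) volume 0 1 := by
  rw [Set.uIcc_of_le zero_le_one |>.symm] at hslit
  exact (ContinuousOn.cpow_const (by fun_prop) hslit).intervalIntegrable

end AffinePaths

theorem integral_integral_cpow_affine {A e f σ : ℂ} (hσ₀ : σ ≠ 0) (hσ₁ : σ ≠ 1)
    (hslit : ∀ u ∈ Set.Icc (0:ℝ) 1, ∀ v ∈ Set.Icc (0:ℝ) 1, A + u * e + v * f ∈ slitPlane) :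
    ∫ u in (0:ℝ)..1, ∫ v in (0:ℝ)..1, (A + u * e + v * f) ^ (σ - 2) * (e * f) =
      ((A + e + f) ^ σ - (A + f) ^ σ - (A + e) ^ σ + A ^ σ) / ((σ - 1) * σ) := by
  rcases eq_or_ne e 0 with rfl | he
  · simp
  rcases eq_or_ne f 0 with rfl | hf
  · simp
  have hσ₁' : σ - 1 ≠ 0 := sub_ne_zero.mpr hσ₁
  have hinner : ∀ u ∈ Set.Icc (0:ℝ) 1,
      ∫ v in (0:ℝ)..1, (A + u * e + v * f) ^ (σ - 2) * (e * f) =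
        ((A + f + u * e) ^ (σ - 1) - (A + u * e) ^ (σ - 1)) * (e / (σ - 1)) := by
    intro u hu
    rw [intervalIntegral.integral_mul_const, show σ - 2 = σ - 1 - 1 by ring,
      integral_cpow_affine hf hσ₁' (hslit u hu)]
    field_simp
    rw [add_right_comm A]
  have hcorner : ∀ v ∈ Set.Icc (0:ℝ) 1, ∀ u ∈ Set.Icc (0:ℝ) 1,
      A + v * f + u * e ∈ slitPlane := fun v hv u hu => by
    simpa only [add_right_comm] using hslit u hu v hv
  have hslit₁ : ∀ u ∈ Set.Icc (0:ℝ) 1, A + f + u * e ∈ slitPlane := by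
    simpa using hcorner 1 (by simp)
  have hslit₀ : ∀ u ∈ Set.Icc (0:ℝ) 1, A + u * e ∈ slitPlane := by
    simpa using hcorner 0 (by simp)
  rw [intervalIntegral.integral_congr (g := fun u : ℝ =>
      ((A + f + u * e) ^ (σ - 1) - (A + u * e) ^ (σ - 1)) * (e / (σ - 1)))
      (fun u hu => hinner u (by rwa [Set.uIcc_of_le zero_le_one] at hu)),
    intervalIntegral.integral_mul_const,
    intervalIntegral.integral_sub (intervalIntegrable_cpow_affine hslit₁)
      (intervalIntegrable_cpow_affine hslit₀),
    integral_cpow_affine he hσ₀ hslit₁, integral_cpow_affine he hσ₀ hslit₀]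
  field_simp
  rw [add_right_comm A f e]
  ring

section Holder

variable {r : ℝ} {ζ ξ : ℂ}

theorem norm_cpow_sub_cpow_le_of_norm_le_s7 (hr0 : 0 ≤ r) (hr1 : r ≤ 1)
    (hξ : ‖ξ‖ ≤ 2 * ‖ζ - ξ‖) : ‖ζ ^ (r:ℂ) - ξ ^ (r:ℂ)‖ ≤ 6 * ‖ζ - ξ‖ ^ r := by
  set h := ‖ζ - ξ‖
  have hsmall : ∀ η : ℂ, ‖η‖ ≤ 3 * h → ‖η ^ (r:ℂ)‖ ≤ 3 * h ^ r := fun η hη =>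
    calc ‖η ^ (r:ℂ)‖ = ‖η‖ ^ r := norm_cpow_real η r
      _ ≤ (3 * h) ^ r := Real.rpow_le_rpow (norm_nonneg η) hη hr0
      _ = 3 ^ r * h ^ r := Real.mul_rpow (by norm_num) (norm_nonneg _)
      _ ≤ 3 * h ^ r := by
        gcongr
        exact Real.rpow_le_self_of_one_le (by norm_num) hr1
  have hζ : ‖ζ‖ ≤ 3 * h := by
    linarith [norm_le_norm_add_norm_sub' ζ ξ, norm_sub_rev ζ ξ]
  calc ‖ζ ^ (r:ℂ) - ξ ^ (r:ℂ)‖ ≤ ‖ζ ^ (r:ℂ)‖ + ‖ξ ^ (r:ℂ)‖ := norm_sub_le _ _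
    _ ≤ 3 * h ^ r + 3 * h ^ r :=
      add_le_add (hsmall ζ hζ) (hsmall ξ (hξ.trans (by linarith [norm_nonneg (ζ - ξ)])))
    _ = 6 * h ^ r := by ring

theorem norm_cpow_sub_cpow_le_of_two_mul_lt_s7 (hr0 : 0 ≤ r) (hr1 : r ≤ 1)
    (hζ : 0 < ζ.re) (hξ : 0 < ξ.re) (hfar : 2 * ‖ζ - ξ‖ < ‖ξ‖) :
    ‖ζ ^ (r:ℂ) - ξ ^ (r:ℂ)‖ ≤ ‖ζ - ξ‖ ^ r := by
  rcases eq_or_ne ζ ξ with rfl | hne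
  · rw [sub_self, sub_self, norm_zero]
    positivity
  set h := ‖ζ - ξ‖
  have hh : 0 < h := norm_pos_iff.mpr (sub_ne_zero.mpr hne)
  have hseg : ∀ t ∈ segment ℝ ξ ζ, 0 < t.re ∧ h < ‖t‖ := fun t ht =>
    ⟨(convex_halfSpace_re_gt 0).segment_subset hξ hζ ht,
      by linarith [norm_sub_le_of_mem_segment ht, norm_le_norm_add_norm_sub' ξ t, norm_sub_rev t ξ]⟩
  have hderiv : ∀ t ∈ segment ℝ ξ ζ, HasDerivWithinAt (fun z : ℂ => z ^ (r:ℂ))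
      ((r:ℂ) * t ^ ((r:ℂ) - 1)) (segment ℝ ξ ζ) t := fun t ht =>
    (hasStrictDerivAt_cpow_const (.inl (hseg t ht).1)).hasDerivAt.hasDerivWithinAt
  have hbound : ∀ t ∈ segment ℝ ξ ζ, ‖(r:ℂ) * t ^ ((r:ℂ) - 1)‖ ≤ h ^ (r - 1) := fun t ht =>
    calc ‖(r:ℂ) * t ^ ((r:ℂ) - 1)‖ = r * ‖t‖ ^ (r - 1) := by
          rw [norm_mul, norm_real, Real.norm_of_nonneg hr0, ← norm_cpow_real]
          push_cast
          rfl
      _ ≤ 1 * h ^ (r - 1) :=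
          mul_le_mul hr1 (Real.rpow_le_rpow_of_nonpos hh (hseg t ht).2.le (by linarith))
            (by positivity) zero_le_one
      _ = h ^ (r - 1) := one_mul _
  calc ‖ζ ^ (r:ℂ) - ξ ^ (r:ℂ)‖ ≤ h ^ (r - 1) * h :=
        Convex.norm_image_sub_le_of_norm_hasDerivWithin_le hderiv hbound
          (convex_segment ξ ζ) (left_mem_segment ℝ ξ ζ) (right_mem_segment ℝ ξ ζ)
    _ = h ^ r := by rw [← Real.rpow_add_one hh.ne', sub_add_cancel]

theorem norm_cpow_sub_cpow_le_s7 (hr0 : 0 ≤ r) (hr1 : r ≤ 1) (hζ : 0 < ζ.re) (hξ : 0 < ξ.re) :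
    ‖ζ ^ (r:ℂ) - ξ ^ (r:ℂ)‖ ≤ 6 * ‖ζ - ξ‖ ^ r := by
  rcases le_or_gt ‖ξ‖ (2 * ‖ζ - ξ‖) with hnear | hfar
  · exact norm_cpow_sub_cpow_le_of_norm_le_s7 hr0 hr1 hnear
  · have := Real.rpow_nonneg (norm_nonneg (ζ - ξ)) r
    linarith [norm_cpow_sub_cpow_le_of_two_mul_lt_s7 hr0 hr1 hζ hξ hfar]

end Holder

/-- The double integral `∫_γ dz ∫_γ dw̄ (−i(z − w̄))^{σ−2}` along the segment `γ` from `w` to `z`,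
parametrized by `[0, 1]`. -/
noncomputable def segmentKernelIntegral (σ z w : ℂ) : ℂ :=
  ∫ u in (0:ℝ)..1, ∫ v in (0:ℝ)..1,
    (-I * ((w + u * (z - w)) - conj (w + v * (z - w)))) ^ (σ - 2) * (z - w) * conj (z - w)

theorem re_neg_I_mul_sub_conj_s7 (p q : ℂ) : (-I * (p - conj q)).re = p.im + q.im := by
  simp

theorem im_add_mul_sub_pos {z w : ℂ} (hz : 0 < z.im) (hw : 0 < w.im) {u : ℝ}
    (hu : u ∈ Set.Icc (0:ℝ) 1) : 0 < (w + u * (z - w)).im := by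
  simpa only [real_smul, Set.mem_ofPred_eq] using
    (convex_halfSpace_im_gt 0).add_smul_sub_mem hw hz hu

theorem segmentKernelIntegral_eq {σ : ℂ} (hσ₀ : σ ≠ 0) (hσ₁ : σ ≠ 1) {z w : ℂ}
    (hz : 0 < z.im) (hw : 0 < w.im) :
    segmentKernelIntegral σ z w =
      ((-I * (z - conj z)) ^ σ - (-I * (w - conj z)) ^ σ - (-I * (z - conj w)) ^ σ
        + (-I * (w - conj w)) ^ σ) / ((σ - 1) * σ) := by
  set A := -I * (w - conj w)
  set e := -I * (z - w)
  set f := I * conj (z - w)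
  have hkernel : ∀ u v : ℝ,
      -I * ((w + u * (z - w)) - conj (w + v * (z - w))) = A + u * e + v * f := fun u v => by
    simp only [A, e, f, map_add, map_mul, conj_ofReal]
    ring
  have hintegrand : ∀ u v : ℝ,
      (-I * ((w + u * (z - w)) - conj (w + v * (z - w)))) ^ (σ - 2) * (z - w) * conj (z - w)
        = (A + u * e + v * f) ^ (σ - 2) * (e * f) := fun u v => by
    rw [hkernel, mul_assoc]
    congr 1
    linear_combination ((z - w) * conj (z - w)) * I_mul_I
  have hslit : ∀ u ∈ Set.Icc (0:ℝ) 1, ∀ v ∈ Set.Icc (0:ℝ) 1, A + u * e + v * f ∈ slitPlane :=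
    fun u hu v hv => by
      refine .inl ?_
      rw [← hkernel, re_neg_I_mul_sub_conj_s7]
      linarith [im_add_mul_sub_pos hz hw hu, im_add_mul_sub_pos hz hw hv]
  simp only [segmentKernelIntegral, hintegrand]
  rw [integral_integral_cpow_affine hσ₀ hσ₁ hslit]
  have h11 := hkernel 1 1
  have h01 := hkernel 0 1
  have h10 := hkernel 1 0
  simp only [ofReal_one, ofReal_zero, one_mul, zero_mul, add_zero, add_sub_cancel] at h11 h01 h10
  rw [← h11, ← h01, ← h10]

theorem norm_segmentKernelIntegral_le {r : ℝ} (hr0 : 0 < r) (hr1 : r < 1) {z w : ℂ}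
    (hz : 0 < z.im) (hw : 0 < w.im) :
    ‖segmentKernelIntegral r z w‖ ≤ 12 / ((1 - r) * r) * ‖z - w‖ ^ r := by
  have hσ₀ : (r:ℂ) ≠ 0 := ofReal_ne_zero.mpr hr0.ne'
  have hσ₁ : (r:ℂ) ≠ 1 := fun h => hr1.ne (ofReal_eq_one.mp h)
  have hnorm₁ : ‖(r:ℂ) - 1‖ = 1 - r := by
    rw [← ofReal_one, ← ofReal_sub, norm_real, Real.norm_of_nonpos (by linarith), neg_sub]
  have hnorm₀ : ‖(r:ℂ)‖ = r := by rw [norm_real, Real.norm_of_nonneg hr0.le]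
  have hincrement : ∀ q : ℂ, 0 < q.im →
      ‖(-I * (z - conj q)) ^ (r:ℂ) - (-I * (w - conj q)) ^ (r:ℂ)‖ ≤ 6 * ‖z - w‖ ^ r := by
    intro q hq
    have hre : ∀ p : ℂ, 0 < p.im → 0 < (-I * (p - conj q)).re := fun p hp => by
      rw [re_neg_I_mul_sub_conj_s7]; linarith
    have hdiff : -I * (z - conj q) - -I * (w - conj q) = -I * (z - w) := by ring
    have hholder := norm_cpow_sub_cpow_le_s7 hr0.le hr1.le (hre z hz) (hre w hw)
    rwa [hdiff, norm_mul, norm_neg, norm_I, one_mul] at hholder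
  rw [segmentKernelIntegral_eq hσ₀ hσ₁ hz hw, norm_div, norm_mul, hnorm₁, hnorm₀,
    div_le_iff₀ (by nlinarith)]
  calc ‖(-I * (z - conj z)) ^ (r:ℂ) - (-I * (w - conj z)) ^ (r:ℂ) - (-I * (z - conj w)) ^ (r:ℂ)
        + (-I * (w - conj w)) ^ (r:ℂ)‖
      ≤ ‖(-I * (z - conj z)) ^ (r:ℂ) - (-I * (w - conj z)) ^ (r:ℂ)‖
        + ‖(-I * (z - conj w)) ^ (r:ℂ) - (-I * (w - conj w)) ^ (r:ℂ)‖ := by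
          refine le_of_eq_of_le ?_ (norm_sub_le _ _)
          congr 1
          ring
    _ ≤ 6 * ‖z - w‖ ^ r + 6 * ‖z - w‖ ^ r := add_le_add (hincrement z hz) (hincrement w hw)
    _ = 12 / ((1 - r) * r) * ‖z - w‖ ^ r * ((1 - r) * r) := by
          field_simp [show 1 - r ≠ 0 by linarith, hr0.ne']
          ring

theorem integral_mul_conj {U : Type*} [MeasurableSpace U] (P : Measure U) (X : U → ℂ) :
    ∫ ω, X ω * conj (X ω) ∂P = ↑(∫ ω, ‖X ω‖ ^ 2 ∂P) := by
  simp only [mul_conj', ← ofReal_pow, integral_complex_ofReal]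

theorem cos_pi_mul_pos {α : ℝ} (h₀ : -(1 / 2) < α) (h₁ : α < 1 / 2) :
    0 < Real.cos (Real.pi * α) :=
  Real.cos_pos_of_mem_Ioo ⟨by nlinarith [Real.pi_pos], by nlinarith [Real.pi_pos]⟩

theorem re_mul_segmentKernelIntegral_le {α : ℝ} (hα : α ∈ Set.Ioo (0 : ℝ) (1 / 2)) {z w : ℂ}
    (hz : 0 < z.im) (hw : 0 < w.im) :
    (((α * (1 - 2 * α) / (2 * Real.cos (Real.pi * α))) : ℂ) *
        segmentKernelIntegral (2 * α) z w).re
      ≤ 3 / Real.cos (Real.pi * α) * ‖z - w‖ ^ (2 * α) := by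
  obtain ⟨hα0, hα1⟩ := hα
  have hcos := cos_pi_mul_pos (by linarith) hα1
  set K := α * (1 - 2 * α) / (2 * Real.cos (Real.pi * α))
  have hK : ((α * (1 - 2 * α) / (2 * Real.cos (Real.pi * α))) : ℂ) = (K : ℂ) := by
    simp only [K]; push_cast; ring
  have hK0 : 0 ≤ K := div_nonneg (mul_nonneg hα0.le (by linarith)) (by positivity)
  have hKJ : K * (12 / ((1 - 2 * α) * (2 * α))) = 3 / Real.cos (Real.pi * α) := by
    have hD : 2 * Real.cos (Real.pi * α) * ((1 - 2 * α) * (2 * α)) ≠ 0 :=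
      mul_ne_zero (by positivity) (mul_ne_zero (by linarith) (by linarith))
    rw [div_mul_div_comm, div_eq_div_iff hD hcos.ne']
    ring
  have hJ := norm_segmentKernelIntegral_le (r := 2 * α) (by linarith) (by linarith) hz hw
  push_cast at hJ
  rw [hK]
  calc ((K : ℂ) * segmentKernelIntegral (2 * α) z w).re
      ≤ K * ‖segmentKernelIntegral (2 * α) z w‖ := by
        rw [re_ofReal_mul]; exact mul_le_mul_of_nonneg_left (re_le_norm _) hK0
    _ ≤ K * (12 / ((1 - 2 * α) * (2 * α)) * ‖z - w‖ ^ (2 * α)) :=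
        mul_le_mul_of_nonneg_left hJ hK0
    _ = 3 / Real.cos (Real.pi * α) * ‖z - w‖ ^ (2 * α) := by rw [← mul_assoc, hKJ]

theorem stmt7_general (α : ℝ) (hα : α ∈ Set.Ioo (0 : ℝ) (1 / 2))
    {U : Type*} [MeasurableSpace U] (P : Measure U)
    (Γ : ℂ → U → ℂ)
    (hcov : ∀ z w : ℂ, 0 < z.im → 0 < w.im →
      (∫ ω, (Γ z ω - Γ w ω) * (starRingEnd ℂ) (Γ z ω - Γ w ω) ∂P) =
        ((α * (1 - 2 * α) / (2 * Real.cos (Real.pi * α))) : ℂ) *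
          ∫ u in (0:ℝ)..1, ∫ v in (0:ℝ)..1,
            (-I * ((w + u * (z - w)) - (starRingEnd ℂ) (w + v * (z - w))))
                ^ (2 * (α : ℂ) - 2)
              * (z - w) * (starRingEnd ℂ) (z - w)) :
    ∃ c > 0, ∀ ε η : ℝ, 0 < ε → 0 < η → ∀ s t : ℂ, 0 ≤ s.im → 0 ≤ t.im →
      (∫ ω, ‖Γ (t + I * ε) ω - Γ (s + I * ε) ω‖ ^ 2 ∂P)
        ≤ c * ‖t - s‖ ^ (2 * α) ∧
      (∫ ω, ‖Γ (t + I * ε) ω - Γ (t + I * η) ω‖ ^ 2 ∂P)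
        ≤ c * |ε - η| ^ (2 * α) := by
  have hbound : ∀ z w : ℂ, 0 < z.im → 0 < w.im →
      ∫ ω, ‖Γ z ω - Γ w ω‖ ^ 2 ∂P ≤ 3 / Real.cos (Real.pi * α) * ‖z - w‖ ^ (2 * α) := by
    intro z w hz hw
    have hre := congrArg re (hcov z w hz hw)
    rw [integral_mul_conj, ofReal_re] at hre
    exact hre ▸ re_mul_segmentKernelIntegral_le hα hz hw
  refine ⟨3 / Real.cos (Real.pi * α), div_pos three_pos (cos_pi_mul_pos (by linarith [hα.1]) hα.2),
    fun ε η hε hη s t hs ht => ⟨?_, ?_⟩⟩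
  · simpa using hbound (t + I * ε) (s + I * ε) (by simp; linarith) (by simp; linarith)
  · simpa [← mul_sub, ← ofReal_sub] using
      hbound (t + I * ε) (t + I * η) (by simp; linarith) (by simp; linarith)

/-- Moment bounds for the regularized analytic fBm `Γ^ε_t = Γ_{t+iε}`:
`E[|Γ^ε_t − Γ^ε_s|²] ≤ c|t−s|^{2α}` and `E[|Γ^ε_t − Γ^η_t|²] ≤ c|ε−η|^{2α}`,
given the covariance of path integrals of `Γ'` along segments. -/
theorem stmt7 (α : ℝ) (hα : α ∈ Set.Ioo (0 : ℝ) (1 / 2))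
    {U : Type*} [MeasurableSpace U] (P : Measure U) [IsProbabilityMeasure P]
    (Γ : ℂ → U → ℂ)
    (hL2 : ∀ z : ℂ, 0 < z.im → MemLp (Γ z) 2 P)
    (hcov : ∀ z w : ℂ, 0 < z.im → 0 < w.im →
      (∫ ω, (Γ z ω - Γ w ω) * (starRingEnd ℂ) (Γ z ω - Γ w ω) ∂P) =
        ((α * (1 - 2 * α) / (2 * Real.cos (Real.pi * α))) : ℂ) *
          ∫ u in (0:ℝ)..1, ∫ v in (0:ℝ)..1,
            (-I * ((w + u * (z - w)) - (starRingEnd ℂ) (w + v * (z - w))))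
                ^ (2 * (α : ℂ) - 2)
              * (z - w) * (starRingEnd ℂ) (z - w)) :
    ∃ c > 0, ∀ ε η : ℝ, 0 < ε → 0 < η → ∀ s t : ℂ, 0 ≤ s.im → 0 ≤ t.im →
      (∫ ω, ‖Γ (t + I * ε) ω - Γ (s + I * ε) ω‖ ^ 2 ∂P)
        ≤ c * ‖t - s‖ ^ (2 * α) ∧
      (∫ ω, ‖Γ (t + I * ε) ω - Γ (t + I * η) ω‖ ^ 2 ∂P)
        ≤ c * |ε - η| ^ (2 * α) :=
  stmt7_general α hα P Γ hcov
end

section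
/- Multiplicativity of iterated integrals (Chen's relation) for smooth paths: let f¹,…,fⁿ : [0,T] → ℂ be C¹ functions and define the iterated integrals recursively by 𝓙_{ts}(df¹) = f¹_t − f¹_s and 𝓙_{ts}(df^k ⋯ df¹) = ∫_s^t (f^k)'(u) 𝓙_{us}(df^{k−1} ⋯ df¹) du. Then for all s ≤ u ≤ t, 𝓙_{ts}(dfⁿ ⋯ df¹) − 𝓙_{tu}(dfⁿ ⋯ df¹) − 𝓙_{us}(dfⁿ ⋯ df¹) = Σ_{i=1}^{n−1} 𝓙_{tu}(dfⁿ ⋯ df^{i+1}) · 𝓙_{us}(df^i ⋯ df¹). -/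
open MeasureTheory intervalIntegral

/-- Iterated Riemann integrals: `iterInt f f' n t s = 𝓙_{ts}(df^n ⋯ df^0)`, defined by
`iterInt f f' 0 t s = f 0 t − f 0 s` and
`iterInt f f' (n+1) t s = ∫_s^t (f (n+1))'(u) · iterInt f f' n u s du`. -/
noncomputable def iterInt (f f' : ℕ → ℝ → ℂ) : ℕ → ℝ → ℝ → ℂ
  | 0 => fun t s => f 0 t - f 0 s
  | n + 1 => fun t s => ∫ u in s..t, f' (n + 1) u * iterInt f f' n u s

/-!
Induction on `n` with `s` and `u` fixed. Splitting the outer integral of `𝓙_{ts}` at `u` turns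
`𝓙_{ts} − 𝓙_{tu} − 𝓙_{us}` at level `n + 1` into `∫_u^t (f^{n+1})'(v) (𝓙_{vs} − 𝓙_{vu}) dv` with
level-`n` integrands. The induction hypothesis writes the bracket as `𝓙_{us}` plus the Chen sum
at `v`; integrating term by term, the constant term gives `(f^{n+1}_t − f^{n+1}_u) 𝓙_{us}` by
the fundamental theorem of calculus and each summand gains one more integration, which is exactly
the Chen sum at level `n + 1`.
-/

section IterInt

variable {f f' : ℕ → ℝ → ℂ}

theorem iterInt_zero_apply (t s : ℝ) : iterInt f f' 0 t s = f 0 t - f 0 s := rfl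

theorem iterInt_succ_apply (n : ℕ) (t s : ℝ) :
    iterInt f f' (n + 1) t s = ∫ v in s..t, f' (n + 1) v * iterInt f f' n v s := rfl

theorem continuous_iterInt (hf₀ : Continuous (f 0)) (hcont : ∀ i, Continuous (f' i))
    (n : ℕ) (s : ℝ) : Continuous fun t => iterInt f f' n t s := by
  induction n with
  | zero => exact hf₀.sub continuous_const
  | succ n ih =>
    exact continuous_primitive (fun a b => ((hcont _).mul ih).intervalIntegrable a b) s

theorem iterInt_succ_sub_iterInt_succ (hf₀ : Continuous (f 0))
    (hcont : ∀ i, Continuous (f' i)) (n : ℕ) (s u t : ℝ) :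
    iterInt f f' (n + 1) t s - iterInt f f' (n + 1) u s
      = ∫ v in u..t, f' (n + 1) v * iterInt f f' n v s :=
  have hint : ∀ a b, IntervalIntegrable (fun v => f' (n + 1) v * iterInt f f' n v s) volume a b :=
    fun a b => ((hcont _).mul (continuous_iterInt hf₀ hcont n s)).intervalIntegrable a b
  integral_interval_sub_left (hint s t) (hint s u)

theorem iterInt_shift_sub {i n : ℕ} (hi : i < n) (t u : ℝ) :
    iterInt (fun j => f (j + i + 1)) (fun j => f' (j + i + 1)) (n - i) t u
      = ∫ v in u..t, f' (n + 1) v *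
          iterInt (fun j => f (j + i + 1)) (fun j => f' (j + i + 1)) (n - 1 - i) v u := by
  obtain ⟨k, rfl⟩ : ∃ k, n = k + 1 + i := ⟨n - i - 1, by omega⟩
  rw [show k + 1 + i - i = k + 1 by omega, show k + 1 + i - 1 - i = k by omega]
  rfl

theorem iterInt_chen_succ (hderiv : ∀ i t, HasDerivAt (f i) (f' i t) t)
    (hcont : ∀ i, Continuous (f' i)) {n : ℕ} {s u : ℝ}
    (ih : ∀ t, iterInt f f' n t s - iterInt f f' n t u - iterInt f f' n u s
      = ∑ i : Fin n,
          iterInt (fun j => f (j + (i : ℕ) + 1)) (fun j => f' (j + (i : ℕ) + 1))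
              (n - 1 - (i : ℕ)) t u
            * iterInt f f' (i : ℕ) u s) (t : ℝ) :
    iterInt f f' (n + 1) t s - iterInt f f' (n + 1) t u - iterInt f f' (n + 1) u s
      = ∑ i : Fin (n + 1),
          iterInt (fun j => f (j + (i : ℕ) + 1)) (fun j => f' (j + (i : ℕ) + 1))
              (n + 1 - 1 - (i : ℕ)) t u
            * iterInt f f' (i : ℕ) u s := by
  have hf : ∀ i, Continuous (f i) := fun i =>
    continuous_iff_continuousAt.2 fun t => (hderiv i t).continuousAt
  set A : Fin n → ℝ → ℂ := fun i v =>
    iterInt (fun j => f (j + (i : ℕ) + 1)) (fun j => f' (j + (i : ℕ) + 1)) (n - 1 - i) v u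
  have hA : ∀ i, Continuous (A i) := fun i =>
    continuous_iterInt (f := fun j => f (j + i + 1)) (hf _) (fun _ => hcont _) _ u
  have hJ : ∀ a, Continuous fun v => iterInt f f' n v a :=
    continuous_iterInt (hf 0) hcont n
  calc iterInt f f' (n + 1) t s - iterInt f f' (n + 1) t u - iterInt f f' (n + 1) u s
      = ∫ v in u..t, f' (n + 1) v * (iterInt f f' n v s - iterInt f f' n v u) := by
        simp only [mul_sub]
        rw [sub_right_comm, iterInt_succ_sub_iterInt_succ (hf 0) hcont, iterInt_succ_apply]
        exact (integral_sub (((hcont _).mul (hJ s)).intervalIntegrable _ _)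
          (((hcont _).mul (hJ u)).intervalIntegrable _ _)).symm
    _ = ∫ v in u..t, (f' (n + 1) v * iterInt f f' n u s
          + ∑ i : Fin n, f' (n + 1) v * A i v * iterInt f f' i u s) := by
        congr with v
        rw [sub_eq_iff_eq_add.1 (ih v), mul_add, add_comm, Finset.mul_sum]
        simp only [A, mul_assoc]
    _ = (f (n + 1) t - f (n + 1) u) * iterInt f f' n u s
          + ∑ i : Fin n, iterInt (fun j => f (j + (i : ℕ) + 1)) (fun j => f' (j + (i : ℕ) + 1))
              (n - i) t u * iterInt f f' i u s := by
        have hterm : ∀ i, Continuous fun v => f' (n + 1) v * A i v * iterInt f f' i u s :=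
          fun i => ((hcont _).mul (hA i)).mul continuous_const
        rw [integral_add (((hcont _).intervalIntegrable _ _).mul_const _)
            ((continuous_finsetSum _ fun i _ => hterm i).intervalIntegrable _ _),
          integral_finsetSum fun i _ => (hterm i).intervalIntegrable _ _,
          intervalIntegral.integral_mul_const,
          integral_eq_sub_of_hasDerivAt (fun v _ => hderiv _ v) ((hcont _).intervalIntegrable _ _)]
        congr 1
        refine Finset.sum_congr rfl fun i _ => ?_
        rw [intervalIntegral.integral_mul_const, iterInt_shift_sub i.isLt]
    _ = _ := by
        rw [Fin.sum_univ_castSucc, add_comm]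
        simp [iterInt_zero_apply]

end IterInt

theorem stmt12_general (f f' : ℕ → ℝ → ℂ)
    (hderiv : ∀ i t, HasDerivAt (f i) (f' i t) t)
    (hcont : ∀ i, Continuous (f' i))
    (n : ℕ) (s u t : ℝ) :
    iterInt f f' n t s - iterInt f f' n t u - iterInt f f' n u s
      = ∑ i : Fin n,
          iterInt (fun j => f (j + (i : ℕ) + 1)) (fun j => f' (j + (i : ℕ) + 1))
              (n - 1 - (i : ℕ)) t u
            * iterInt f f' (i : ℕ) u s := by
  induction n generalizing t with
  | zero => simp only [iterInt_zero_apply, Finset.univ_eq_empty, Finset.sum_empty]; ring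
  | succ n ih => exact iterInt_chen_succ hderiv hcont ih t

/-- Chen's relation (multiplicativity) for iterated integrals of `C¹` paths:
`𝓙_{ts} − 𝓙_{tu} − 𝓙_{us} = ∑_i 𝓙_{tu}(upper part) · 𝓙_{us}(lower part)`. -/
theorem stmt12 (f f' : ℕ → ℝ → ℂ)
    (hderiv : ∀ i t, HasDerivAt (f i) (f' i t) t)
    (hcont : ∀ i, Continuous (f' i))
    (n : ℕ) (s u t : ℝ) (hsu : s ≤ u) (hut : u ≤ t) :
    iterInt f f' n t s - iterInt f f' n t u - iterInt f f' n u s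
      = ∑ i : Fin n,
          iterInt (fun j => f (j + (i : ℕ) + 1)) (fun j => f' (j + (i : ℕ) + 1))
              (n - 1 - (i : ℕ)) t u
            * iterInt f f' (i : ℕ) u s :=
  stmt12_general f f' hderiv hcont n s u t
end

section
/- Uniqueness part of the sewing lemma: let Ω ⊆ ℂ be convex, μ > 1, and suppose g, g̃ ∈ C_2(Ω;V) both satisfy δg = δg̃ (i.e. g_{ts} − g_{tu} − g_{us} = g̃_{ts} − g̃_{tu} − g̃_{us} for all s,u,t) and both satisfy the Hölder bound |g_{ts}| ≤ K|t−s|^μ, |g̃_{ts}| ≤ K̃|t−s|^μ. Then g = g̃. -/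
/-!
The difference `h = g - g'` satisfies `δh = 0`, i.e. it is an additive cocycle on `Ω`, and it is
still `μ`-Hölder. Subdividing the segment `[s, t] ⊆ Ω` into `n` equal pieces and telescoping gives
`‖h t s‖ ≤ n · C (‖t - s‖ / n) ^ μ = C ‖t - s‖ ^ μ n ^ (1 - μ)`, which tends to `0` since `μ > 1`.
-/

open Finset Filter

theorem cocycle_sum_range {α V : Type*} [AddCommGroup V] {Ω : Set α} {f : α → α → V}
    (hf : ∀ a ∈ Ω, ∀ b ∈ Ω, ∀ c ∈ Ω, f c a = f c b + f b a)
    {p : ℕ → α} {n : ℕ} (hp : ∀ i ≤ n, p i ∈ Ω) :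
    f (p n) (p 0) = ∑ i ∈ range n, f (p (i + 1)) (p i) := by
  induction n with
  | zero =>
    have h0 := hf _ (hp 0 le_rfl) _ (hp 0 le_rfl) _ (hp 0 le_rfl)
    simpa using h0
  | succ n ih =>
    rw [sum_range_succ, ← ih fun i hi => hp i (by omega),
      hf _ (hp 0 (by omega)) _ (hp n (by omega)) _ (hp (n + 1) le_rfl), add_comm]

section Cocycle

variable {E V : Type*} [NormedAddCommGroup E] [NormedSpace ℝ E] {Ω : Set E} {f : E → E → V}

theorem norm_cocycle_le_mul_natCast_rpow [SeminormedAddCommGroup V] (hΩ : Convex ℝ Ω)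
    (hf : ∀ a ∈ Ω, ∀ b ∈ Ω, ∀ c ∈ Ω, f c a = f c b + f b a) {μ C : ℝ}
    (hC : ∀ s ∈ Ω, ∀ t ∈ Ω, ‖f t s‖ ≤ C * ‖t - s‖ ^ μ)
    {s t : E} (hs : s ∈ Ω) (ht : t ∈ Ω) {n : ℕ} (hn : 0 < n) :
    ‖f t s‖ ≤ C * ‖t - s‖ ^ μ * (n : ℝ) ^ (1 - μ) := by
  have hn' : (0 : ℝ) < n := by exact_mod_cast hn
  set p : ℕ → E := fun i => AffineMap.lineMap s t ((i : ℝ) / n)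
  have hpΩ : ∀ i ≤ n, p i ∈ Ω := fun i hi =>
    hΩ.lineMap_mem hs ht ⟨by positivity, div_le_one_of_le₀ (by exact_mod_cast hi) hn'.le⟩
  have hstep : ∀ i, ‖p (i + 1) - p i‖ = ‖t - s‖ / n := fun i => by
    rw [← dist_eq_norm, dist_lineMap_lineMap, Real.dist_eq, dist_eq_norm', Nat.cast_succ,
      add_div, add_sub_cancel_left, abs_of_pos (by positivity), one_div_mul_eq_div]
  have hsum : f t s = ∑ i ∈ range n, f (p (i + 1)) (p i) := by
    have hp0 : p 0 = s := by simp [p]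
    have hpn : p n = t := by simp [p, hn'.ne']
    rw [← cocycle_sum_range hf hpΩ, hp0, hpn]
  calc ‖f t s‖ ≤ ∑ _i ∈ range n, C * (‖t - s‖ / n) ^ μ := by
        rw [hsum]
        refine norm_sum_le_of_le _ fun i hi => ?_
        have hi : i + 1 ≤ n := mem_range.mp hi
        rw [← hstep i]
        exact hC _ (hpΩ i (by omega)) _ (hpΩ (i + 1) hi)
    _ = C * ‖t - s‖ ^ μ * (n : ℝ) ^ (1 - μ) := by
        rw [sum_const, card_range, nsmul_eq_mul, Real.div_rpow (norm_nonneg _) hn'.le,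
          Real.rpow_sub hn', Real.rpow_one]
        field_simp

theorem cocycle_eq_zero_of_holder [NormedAddCommGroup V] (hΩ : Convex ℝ Ω)
    (hf : ∀ a ∈ Ω, ∀ b ∈ Ω, ∀ c ∈ Ω, f c a = f c b + f b a) {μ C : ℝ} (hμ : 1 < μ)
    (hC : ∀ s ∈ Ω, ∀ t ∈ Ω, ‖f t s‖ ≤ C * ‖t - s‖ ^ μ)
    {s t : E} (hs : s ∈ Ω) (ht : t ∈ Ω) : f t s = 0 := by
  have hlim : Tendsto (fun n : ℕ => C * ‖t - s‖ ^ μ * (n : ℝ) ^ (1 - μ)) atTop (nhds 0) := by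
    have hpow : Tendsto (fun x : ℝ => x ^ (1 - μ)) atTop (nhds 0) := by
      simpa using tendsto_rpow_neg_atTop (y := μ - 1) (by linarith)
    simpa using (hpow.comp tendsto_natCast_atTop_atTop).const_mul (C * ‖t - s‖ ^ μ)
  have hle : ‖f t s‖ ≤ 0 := ge_of_tendsto hlim <| (eventually_gt_atTop 0).mono fun n hn =>
    norm_cocycle_le_mul_natCast_rpow hΩ hf hC hs ht hn
  exact norm_le_zero_iff.mp hle

end Cocycle

theorem stmt15_general {V : Type*} [NormedAddCommGroup V] [NormedSpace ℂ V]
    (Ω : Set ℂ) (hconv : Convex ℝ Ω) (μ K K' : ℝ) (hμ : 1 < μ)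
    (g g' : ℂ → ℂ → V)
    (hδ : ∀ s ∈ Ω, ∀ u ∈ Ω, ∀ t ∈ Ω,
      g t s - g t u - g u s = g' t s - g' t u - g' u s)
    (hK : ∀ s ∈ Ω, ∀ t ∈ Ω, ‖g t s‖ ≤ K * ‖t - s‖ ^ μ)
    (hK' : ∀ s ∈ Ω, ∀ t ∈ Ω, ‖g' t s‖ ≤ K' * ‖t - s‖ ^ μ) :
    ∀ s ∈ Ω, ∀ t ∈ Ω, g t s = g' t s := by
  intro s hs t ht
  have hcocycle : ∀ a ∈ Ω, ∀ b ∈ Ω, ∀ c ∈ Ω,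
      g c a - g' c a = (g c b - g' c b) + (g b a - g' b a) := fun a ha b hb c hc => by
    have := hδ a ha b hb c hc
    rw [← sub_eq_zero] at this ⊢
    rw [← this]
    abel
  have hholder : ∀ a ∈ Ω, ∀ b ∈ Ω, ‖g b a - g' b a‖ ≤ (K + K') * ‖b - a‖ ^ μ :=
    fun a ha b hb => (norm_sub_le _ _).trans <| by linarith [hK a ha b hb, hK' a ha b hb]
  exact sub_eq_zero.mp <|
    cocycle_eq_zero_of_holder (f := fun b a => g b a - g' b a) hconv hcocycle hμ hholder hs ht

/-- Uniqueness part of the sewing lemma: two 1-increments with the same coboundary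
and both `μ`-Hölder with `μ > 1` coincide. -/
theorem stmt15 {V : Type*} [NormedAddCommGroup V] [NormedSpace ℂ V]
    (Ω : Set ℂ) (hconv : Convex ℝ Ω) (μ K K' : ℝ) (hμ : 1 < μ)
    (g g' : ℂ → ℂ → V)
    (hg0 : ∀ t ∈ Ω, g t t = 0) (hg'0 : ∀ t ∈ Ω, g' t t = 0)
    (hδ : ∀ s ∈ Ω, ∀ u ∈ Ω, ∀ t ∈ Ω,
      g t s - g t u - g u s = g' t s - g' t u - g' u s)
    (hK : ∀ s ∈ Ω, ∀ t ∈ Ω, ‖g t s‖ ≤ K * ‖t - s‖ ^ μ)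
    (hK' : ∀ s ∈ Ω, ∀ t ∈ Ω, ‖g' t s‖ ≤ K' * ‖t - s‖ ^ μ) :
    ∀ s ∈ Ω, ∀ t ∈ Ω, g t s = g' t s :=
  stmt15_general Ω hconv μ K K' hμ g g' hδ hK hK'
end
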